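/- Let A = {00, 01, 10, 02} ⊂ {0,1,2}^2 and let E ⊂ {0,1,2}^ℤ be the set of bi-infinite concatenations (aligned at even positions) of blocks from A, and set X := E ∪ σ(E). Then the subshift (X,σ) is not a subshift of finite type; in particular, (X,σ) does not satisfy the shadowing property. -/

import Mathlib

/-! In a point of `E` the symbol `2` occurs only at odd positions and in a point of `σ(E)` only at
even ones, so no point of `X` carries two `2`s whose positions differ by an odd number; on the other
hand every configuration with a single `2` lies in `X`. Gluing the configurations with a single `2`
at `0` and at `2n + 1` along the zeros between them gives a point outside `X` all of whose windows
of length `n` occur in `X`, so `X` is not of finite type. For shadowing, follow the orbit of the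
first configuration until its `2` has moved far to the left, then jump to the orbit of the second
one, whose `2` is then far to the right: the jump is small, but a shadowing point would read off a
`2` at both times `0` and `2n + 1`. -/

/-- The two-sided shift map on `(Fin 3)^ℤ`. -/
def shiftZ (x : ℤ → Fin 3) : ℤ → Fin 3 := fun i => x (i + 1)

/-- A subset of the two-sided full shift is a subshift of finite type if it is defined
by forbidding a set of words of some fixed length `n`. -/
def IsSFT (X : Set (ℤ → Fin 3)) : Prop :=
  ∃ (n : ℕ) (F : Set (Fin n → Fin 3)),
    X = {x | ∀ i : ℤ, (fun j : Fin n => x (i + (j : ℕ))) ∉ F}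

-- a (non-canonical) metric on `Fin 3` and on `(Fin 3)^ℤ`
local instance : MetricSpace (Fin 3) :=
  MetricSpace.induced Fin.val Fin.val_injective inferInstance

attribute [local instance] PiCountable.metricSpace

/-- The shadowing property for the restriction of a map `f` to a subset `S`. -/
def HasShadowingOn {Z : Type*} [MetricSpace Z] (f : Z → Z) (S : Set Z) : Prop :=
  ∀ ε : ℝ, 0 < ε → ∃ δ : ℝ, 0 < δ ∧
    ∀ x : ℕ → Z, (∀ n, x n ∈ S) → (∀ n, dist (f (x n)) (x (n + 1)) < δ) →
      ∃ z ∈ S, ∀ n, dist (f^[n] z) (x n) < ε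

open Filter Topology

def spike (p : ℤ) : ℤ → Fin 3 := Pi.single p 2

lemma shiftZ_iterate_apply (z : ℤ → Fin 3) (n : ℕ) (i : ℤ) : shiftZ^[n] z i = z (i + n) := by
  induction n generalizing z with
  | zero => simp
  | succ n ih =>
    rw [Function.iterate_succ_apply, ih, shiftZ, add_assoc]
    push_cast
    rfl

lemma shiftZ_iterate_spike (p : ℤ) (n : ℕ) : shiftZ^[n] (spike p) = spike (p - n) := by
  funext i
  simp [shiftZ_iterate_apply, spike, Pi.single_apply, eq_sub_iff_add_eq]

def blockSubshift : Set (ℤ → Fin 3) :=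
  {x | ∀ k : ℤ, (x (2 * k), x (2 * k + 1)) ∈
    ({(0, 0), (0, 1), (1, 0), (0, 2)} : Set (Fin 3 × Fin 3))}

def unionSubshift : Set (ℤ → Fin 3) := blockSubshift ∪ shiftZ '' blockSubshift

lemma odd_of_mem_blockSubshift {x : ℤ → Fin 3} (hx : x ∈ blockSubshift) {p : ℤ} (hp : x p = 2) :
    Odd p := by
  rcases Int.even_or_odd' p with ⟨k, rfl | rfl⟩
  · have := hx k
    simp_all
  · exact ⟨k, rfl⟩

lemma even_of_mem_image_shiftZ {x : ℤ → Fin 3} (hx : x ∈ shiftZ '' blockSubshift) {p : ℤ}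
    (hp : x p = 2) : Even p := by
  obtain ⟨w, hw, rfl⟩ := hx
  simpa [parity_simps] using odd_of_mem_blockSubshift hw (p := p + 1) hp

lemma even_sub_of_mem_unionSubshift {x : ℤ → Fin 3} (hx : x ∈ unionSubshift) {p q : ℤ}
    (hp : x p = 2) (hq : x q = 2) : Even (p - q) := by
  rcases hx with hx | hx
  · exact (odd_of_mem_blockSubshift hx hp).sub_odd (odd_of_mem_blockSubshift hx hq)
  · exact (even_of_mem_image_shiftZ hx hp).sub (even_of_mem_image_shiftZ hx hq)

lemma spike_mem_blockSubshift {p : ℤ} (hp : Odd p) : spike p ∈ blockSubshift := by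
  obtain ⟨m, rfl⟩ := hp
  intro k
  have hk : 2 * k ≠ 2 * m + 1 := by omega
  by_cases hkm : k = m
  · simp [spike, hkm]
  · simp [spike, hk, show 2 * k + 1 ≠ 2 * m + 1 by omega]

lemma spike_mem_unionSubshift (p : ℤ) : spike p ∈ unionSubshift := by
  rcases Int.even_or_odd p with hp | hp
  · refine Or.inr ⟨spike (p + 1), spike_mem_blockSubshift (hp.add_one), ?_⟩
    simpa using shiftZ_iterate_spike (p + 1) 1
  · exact Or.inl (spike_mem_blockSubshift hp)

lemma notMem_unionSubshift_of_eq_two {x : ℤ → Fin 3} {N : ℤ} (h₀ : x 0 = 2)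
    (hN : x (2 * N + 1) = 2) : x ∉ unionSubshift := fun hx =>
  N.not_even_two_mul_add_one (by simpa using even_sub_of_mem_unionSubshift hx hN h₀)

def glue (x y : ℤ → Fin 3) (m : ℤ) : ℤ → Fin 3 := fun i => if i < m then x i else y i

lemma IsSFT.exists_glue_mem {X : Set (ℤ → Fin 3)} (hX : IsSFT X) :
    ∃ n : ℕ, ∀ x ∈ X, ∀ y ∈ X, ∀ k : ℤ, (∀ i, k ≤ i → i < k + n → x i = y i) →
      glue x y (k + n) ∈ X := by
  obtain ⟨n, F, rfl⟩ := hX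
  refine ⟨n, fun x hx y hy k hxy i => ?_⟩
  by_cases hik : i ≤ k
  · have hwindow : (fun j : Fin n => glue x y (k + n) (i + j)) =
        fun j : Fin n => x (i + (j : ℕ)) :=
      funext fun j => if_pos (by have := j.isLt; omega)
    exact hwindow ▸ hx i
  · have hwindow : (fun j : Fin n => glue x y (k + n) (i + j)) =
        fun j : Fin n => y (i + (j : ℕ)) := by
      funext j
      by_cases h : i + j < k + n
      · exact (if_pos h).trans (hxy _ (by omega) h)
      · exact if_neg h
    exact hwindow ▸ hy i

lemma not_isSFT_unionSubshift : ¬ IsSFT unionSubshift := fun hX => by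
  obtain ⟨n, hglue⟩ := hX.exists_glue_mem
  have hagree : ∀ i : ℤ, 1 ≤ i → i < 1 + n → spike 0 i = spike (2 * n + 1) i := fun i h₁ h₂ => by
    simp [spike, show i ≠ 0 by omega, show i ≠ 2 * n + 1 by omega]
  refine notMem_unionSubshift_of_eq_two (N := n) ?_ ?_
    (hglue _ (spike_mem_unionSubshift 0) _ (spike_mem_unionSubshift _) 1 hagree)
  · simp [glue, spike, show (0 : ℤ) < 1 + n by omega]
  · simp [glue, spike, show ¬ (2 * (n : ℤ) + 1 < 1 + n) by omega]

lemma dist_pi_single_zero_le {ι M : Type*} [Encodable ι] [DecidableEq ι] [MetricSpace M] [Zero M]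
    (p : ι) (a : M) : dist (Pi.single p a : ι → M) 0 ≤ 2⁻¹ ^ Encodable.encode p := by
  rw [PiCountable.dist_eq_tsum, tsum_eq_single p fun i hi => by simp [hi]]
  exact min_le_left _ _

lemma tendsto_dist_pi_single_zero {ι M : Type*} [Encodable ι] [DecidableEq ι] [MetricSpace M]
    [Zero M] (a : M) :
    Tendsto (fun p : ι => dist (Pi.single p a : ι → M) 0) cofinite (𝓝 0) := by
  have hencode : Tendsto (Encodable.encode : ι → ℕ) cofinite atTop :=
    Nat.cofinite_eq_atTop ▸ Encodable.encode_injective.tendsto_cofinite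
  exact squeeze_zero (fun _ => dist_nonneg) (dist_pi_single_zero_le · a)
    ((tendsto_pow_atTop_nhds_zero_of_lt_one (by norm_num) (by norm_num)).comp hencode)

lemma apply_eq_of_dist_lt {ι : Type*} [Encodable ι] {f g : ι → Fin 3} {i : ι}
    (h : dist f g < 2⁻¹ ^ Encodable.encode i) : f i = g i := by
  by_contra hne
  have h₁ : (1 : ℝ) ≤ dist (f i) (g i) := Nat.pairwise_one_le_dist (Fin.val_injective.ne hne)
  have h₂ := PiCountable.dist_le_dist_pi_of_dist_lt h
  have h₃ : (2⁻¹ : ℝ) ^ Encodable.encode i ≤ 1 := pow_le_one₀ (by norm_num) (by norm_num)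
  linarith

def switchOrbit {Z : Type*} (f : Z → Z) (a b : Z) (T : ℕ) (n : ℕ) : Z :=
  f^[n] (if n < T then a else b)

lemma dist_switchOrbit_le {Z : Type*} [PseudoMetricSpace Z] (f : Z → Z) (a b : Z) (T n : ℕ) :
    dist (f (switchOrbit f a b T n)) (switchOrbit f a b T (n + 1)) ≤ dist (f^[T] a) (f^[T] b) := by
  simp only [switchOrbit, ← Function.iterate_succ_apply' f]
  split_ifs with h₁ h₂ h₂
  · simp
  · obtain rfl : T = n + 1 := by omega
    rfl
  · omega
  · simp

lemma tendsto_dist_iterate_spike :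
    Tendsto (fun T : ℕ => dist (shiftZ^[T] (spike 0)) (shiftZ^[T] (spike (2 * T + 1))))
      atTop (𝓝 0) := by
  simp only [shiftZ_iterate_spike, zero_sub]
  have hinj₁ : Function.Injective fun T : ℕ => -(T : ℤ) := neg_injective.comp Nat.cast_injective
  have hinj₂ : Function.Injective fun T : ℕ => 2 * (T : ℤ) + 1 - T := fun a b h => by
    simp only at h; omega
  have hsum := ((tendsto_dist_pi_single_zero (2 : Fin 3)).comp hinj₁.tendsto_cofinite).add
    ((tendsto_dist_pi_single_zero (2 : Fin 3)).comp hinj₂.tendsto_cofinite)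
  rw [add_zero, Nat.cofinite_eq_atTop] at hsum
  exact squeeze_zero (fun _ => dist_nonneg) (fun T => dist_triangle_right _ _ 0) hsum

lemma not_hasShadowingOn_unionSubshift : ¬ HasShadowingOn shiftZ unionSubshift := fun h => by
  obtain ⟨δ, hδ, hshadow⟩ := h 1 one_pos
  obtain ⟨T, hT, hTpos⟩ :=
    ((tendsto_dist_iterate_spike.eventually (gt_mem_nhds hδ)).and (eventually_gt_atTop 0)).exists
  set x := switchOrbit shiftZ (spike 0) (spike (2 * T + 1)) T
  have hx : ∀ n, x n ∈ unionSubshift := fun n => by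
    simp only [x, switchOrbit]
    split_ifs <;> simpa only [shiftZ_iterate_spike] using spike_mem_unionSubshift _
  obtain ⟨z, hz, htrace⟩ :=
    hshadow x hx fun n => (dist_switchOrbit_le _ _ _ _ n).trans_lt hT
  have hzx : ∀ n : ℕ, z n = x n 0 := fun n => by
    simpa [shiftZ_iterate_apply] using apply_eq_of_dist_lt (i := (0 : ℤ)) (htrace n)
  refine notMem_unionSubshift_of_eq_two (N := T) ?_ ?_ hz
  · simpa [x, switchOrbit, hTpos, spike] using hzx 0
  · simpa [x, switchOrbit, shiftZ_iterate_apply, spike, show ¬ 2 * T + 1 < T by omega] using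
      hzx (2 * T + 1)

/-- With `E` the set of bi-infinite concatenations (aligned at even
positions) of the blocks `00, 01, 10, 02` and `X := E ∪ σ(E)`, the subshift `(X, σ)`
is not of finite type; in particular it does not have the shadowing property. -/
theorem union_subshift_not_SFT
    (E X : Set (ℤ → Fin 3))
    (hE : E = {x | ∀ k : ℤ, (x (2 * k), x (2 * k + 1)) ∈
      ({(0, 0), (0, 1), (1, 0), (0, 2)} : Set (Fin 3 × Fin 3))})
    (hX : X = E ∪ shiftZ '' E) :
    ¬ IsSFT X ∧ ¬ HasShadowingOn shiftZ X := by
  subst hE hX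
  exact ⟨not_isSFT_unionSubshift, not_hasShadowingOn_unionSubshift⟩
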